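/- arXiv:1303.1085 — 3 statements merged into one kernel-verified Lean document; each statement's English description precedes it below -/
import Mathlib

section
/- Let x = (x_1,…,x_R) be a vector of distinct real numbers, c = (c_1,…,c_R) a vector of real numbers, B = B(x,c), k a positive integer and 1 ≤ n ≤ R. Denoting by B_{−n} the (R−1)×(R−1) matrix obtained from B by removing the n-th row and column, one has Σ_{l,m : l ≠ n, m ≠ n, l ≠ m} b_{n,l} · b_{m,n} · ((B_{−n})^k)_{l,m} = 0. -/
/-!
With `P = B_{-n}` and `D = diag((x_n - x_l)⁻¹)`, one has
`b_{n,l} b_{m,n} = -c_n² ((x_n - x_l)⁻¹ - (x_n - x_m)⁻¹) b_{l,m} = -c_n² ⁅D, P⁆_{l,m}` for `l ≠ m`,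
and the right-hand side vanishes on the diagonal. So the sum is `-c_n² Σ_{l,m} ⁅D, P⁆_{l,m} (P^k)_{l,m}`.
As `P` is antisymmetric this is `±c_n² tr(⁅D, P⁆ P^k) = ±c_n² tr(D P^(k+1) - P D P^k)`,
which vanishes by cyclicity of the trace.
-/

/-- The generalized weighted Hilbert matrix `B(x,c)` with entries
`b_{m,n} = c_m c_n / (x_m - x_n)` for `m ≠ n` and `0` on the diagonal. -/
noncomputable def Bmat {R : ℕ} (x c : Fin R → ℝ) : Matrix (Fin R) (Fin R) ℝ :=
  Matrix.of fun m n => if m = n then 0 else c m * c n / (x m - x n)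

/-- The matrix `B` with the `n`-th row and column removed, indexed by the
remaining indices. -/
noncomputable def Bminus {R : ℕ} (x c : Fin R → ℝ) (n : Fin R) :
    Matrix {m : Fin R // m ≠ n} {m : Fin R // m ≠ n} ℝ :=
  (Bmat x c).submatrix (fun i : {m : Fin R // m ≠ n} => (i : Fin R))
    (fun i : {m : Fin R // m ≠ n} => (i : Fin R))

namespace Matrix

theorem sum_sum_mul_eq_trace_mul_transpose {m n R : Type*} [Fintype m] [Fintype n]
    [AddCommMonoid R] [Mul R] (A B : Matrix m n R) :
    ∑ i, ∑ j, A i j * B i j = trace (A * Bᵀ) := by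
  simp only [trace, diag_apply, mul_apply, transpose_apply]

variable {ι R : Type*} [Fintype ι] [DecidableEq ι] [CommRing R]

theorem lie_diagonal_apply (d : ι → R) (P : Matrix ι ι R) (i j : ι) :
    ⁅diagonal d, P⁆ i j = (d i - d j) * P i j := by
  rw [Ring.lie_def, sub_apply, diagonal_mul, mul_diagonal]
  ring

theorem trace_lie_mul_pow_self (D P : Matrix ι ι R) (k : ℕ) : trace (⁅D, P⁆ * P ^ k) = 0 := by
  rw [Ring.lie_def, sub_mul, trace_sub, Matrix.mul_assoc, Matrix.mul_assoc, trace_mul_comm P,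
    Matrix.mul_assoc, ← pow_succ, ← pow_succ', sub_self]

theorem sum_sum_lie_mul_pow_eq_zero_of_transpose_eq_neg {P : Matrix ι ι R} (hP : Pᵀ = -P)
    (D : Matrix ι ι R) (k : ℕ) : ∑ i, ∑ j, ⁅D, P⁆ i j * (P ^ k) i j = 0 := by
  rw [sum_sum_mul_eq_trace_mul_transpose, transpose_pow, hP, neg_pow]
  rcases neg_one_pow_eq_or (Matrix ι ι R) k with h | h <;>
    simp [h, trace_lie_mul_pow_self]

end Matrix

open Matrix

section Bmat

variable {R : ℕ} (x c : Fin R → ℝ)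

theorem Bmat_apply_of_ne {m n : Fin R} (h : m ≠ n) : Bmat x c m n = c m * c n / (x m - x n) :=
  if_neg h

theorem Bmat_transpose : (Bmat x c)ᵀ = -Bmat x c := by
  ext m n
  by_cases h : m = n
  · simp [Bmat, h]
  · rw [transpose_apply, neg_apply, Bmat_apply_of_ne x c h, Bmat_apply_of_ne x c (Ne.symm h),
      ← neg_sub, div_neg, mul_comm]

theorem Bminus_transpose (n : Fin R) : (Bminus x c n)ᵀ = -Bminus x c n := by
  rw [Bminus, transpose_submatrix, Bmat_transpose]
  rfl

end Bmat

theorem ite_Bmat_mul_Bmat_eq_lie_diagonal {R : ℕ} {x : Fin R → ℝ} (hx : Function.Injective x)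
    (c : Fin R → ℝ) {n : Fin R} (l m : {i : Fin R // i ≠ n}) :
    (if (l : Fin R) ≠ m then Bmat x c n l * Bmat x c m n else 0) =
      -c n ^ 2 * ⁅diagonal fun i : {i // i ≠ n} => (x n - x i)⁻¹, Bminus x c n⁆ l m := by
  rw [lie_diagonal_apply]
  split_ifs with hlm
  · have hnl : x n - x l ≠ 0 := sub_ne_zero.mpr (hx.ne (Ne.symm l.2))
    have hnm : x n - x m ≠ 0 := sub_ne_zero.mpr (hx.ne (Ne.symm m.2))
    have hlm' : x l - x m ≠ 0 := sub_ne_zero.mpr (hx.ne hlm)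
    rw [Bminus, submatrix_apply, Bmat_apply_of_ne x c (Ne.symm l.2), Bmat_apply_of_ne x c m.2,
      Bmat_apply_of_ne x c hlm, ← neg_sub (x n)]
    field_simp
    ring
  · simp [Subtype.ext (not_not.mp hlm)]

theorem sum_off_diag_powers_eq_zero_general {R : ℕ} (x c : Fin R → ℝ)
    (hx : Function.Injective x) (k : ℕ) (n : Fin R) :
    ∑ l : {m : Fin R // m ≠ n}, ∑ m : {m : Fin R // m ≠ n},
      (if (l : Fin R) ≠ (m : Fin R) then
        Bmat x c n l * Bmat x c m n * ((Bminus x c n) ^ k) l m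
      else 0) = 0 := by
  set D := diagonal fun i : {i // i ≠ n} => (x n - x i)⁻¹
  calc _ = ∑ l : {m : Fin R // m ≠ n}, ∑ m : {m : Fin R // m ≠ n},
        -c n ^ 2 * (⁅D, Bminus x c n⁆ l m * (Bminus x c n ^ k) l m) := by
        refine Fintype.sum_congr _ _ fun l => Fintype.sum_congr _ _ fun m => ?_
        rw [← mul_assoc, ← ite_Bmat_mul_Bmat_eq_lie_diagonal hx, ite_mul, zero_mul]
    _ = -c n ^ 2 * ∑ l, ∑ m, ⁅D, Bminus x c n⁆ l m * (Bminus x c n ^ k) l m := by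
        simp only [Finset.mul_sum]
    _ = 0 := by
        rw [sum_sum_lie_mul_pow_eq_zero_of_transpose_eq_neg (Bminus_transpose x c n), mul_zero]

/-- For any positive integer `k` and any `n`,
`Σ_{l ≠ n, m ≠ n, l ≠ m} b_{n,l} b_{m,n} ((B_{-n})^k)_{l,m} = 0`. -/
theorem sum_off_diag_powers_eq_zero {R : ℕ} (x c : Fin R → ℝ)
    (hx : Function.Injective x) (k : ℕ) (hk : 0 < k) (n : Fin R) :
    ∑ l : {m : Fin R // m ≠ n}, ∑ m : {m : Fin R // m ≠ n},
      (if (l : Fin R) ≠ (m : Fin R) then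
        Bmat x c n l * Bmat x c m n * ((Bminus x c n) ^ k) l m
      else 0) = 0 :=
  sum_off_diag_powers_eq_zero_general x c hx k n
end

section
/- Let x = (x_1,…,x_R) be a vector of distinct real numbers and A = A(x). Then max_{1 ≤ m ≤ R} Σ_{n ≠ m} a_{m,n}² ≤ ‖A‖² ≤ 3 · max_{1 ≤ m ≤ R} Σ_{n ≠ m} a_{m,n}². -/
/-!
Since `A = A(x)` is antisymmetric, `‖A‖` is attained on a pair of vectors with
`A w = ‖A‖ u` and `A u = -‖A‖ w`. The partial-fraction identity
`a_{mn} a_{kn} = a_{mk} (a_{kn} - a_{mn})` for distinct `m, k, n` gives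
`AᵀA = [A, diag r] + 2 (A ⊙ A) + diag s`, with `r` and `s` the row sums of `A` and `A ⊙ A`.
On the pair `(w, u)` the quadratic forms of the commutator cancel, and by the Schur test the
remaining symmetric nonnegative part, whose row sums are `3 s_m`, contributes at most
`3 max_m s_m`. The lower bound is the norm of a single column.
-/

/-- The generalized Hilbert matrix `A(x)` with entries `a_{m,n} = 1/(x_m - x_n)`
for `m ≠ n` and `0` on the diagonal. -/
noncomputable def Amat {R : ℕ} (x : Fin R → ℝ) : Matrix (Fin R) (Fin R) ℝ :=
  Matrix.of fun m n => if m = n then 0 else 1 / (x m - x n)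

/-- The spectral norm of a real matrix: the operator norm induced by the
Euclidean norm. -/
noncomputable def specNorm {R : ℕ} (M : Matrix (Fin R) (Fin R) ℝ) : ℝ :=
  ‖Matrix.toEuclideanCLM (𝕜 := ℝ) M‖

open Matrix Finset Metric
open scoped RealInnerProductSpace

theorem ContinuousLinearMap.exists_norm_le_one_norm_apply_eq_opNorm {E F : Type*}
    [NormedAddCommGroup E] [NormedSpace ℝ E] [ProperSpace E]
    [SeminormedAddCommGroup F] [NormedSpace ℝ F] (T : E →L[ℝ] F) :
    ∃ x, ‖x‖ ≤ 1 ∧ ‖T x‖ = ‖T‖ := by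
  obtain ⟨x, hx, hTx⟩ := ((isCompact_closedBall 0 1).image (by fun_prop)).sSup_mem
    ((nonempty_closedBall.2 zero_le_one).image fun x => ‖T x‖)
  exact ⟨x, mem_closedBall_zero_iff.1 hx, hTx.trans T.sSup_unitClosedBall_eq_norm⟩

section SkewOperator

variable {E : Type*} [NormedAddCommGroup E] [InnerProductSpace ℝ E] {T : E →L[ℝ] E}

theorem ContinuousLinearMap.apply_apply_eq_neg_opNorm_sq_smul
    (hT : ∀ a b, ⟪T a, b⟫ = -⟪a, T b⟫) {x : E} (hx : ‖x‖ ≤ 1) (hTx : ‖T x‖ = ‖T‖) :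
    T (T x) = -(‖T‖ ^ 2) • x := by
  -- `‖T (T x) + ‖T‖² x‖²` expands to at most `‖T‖⁴ - 2 ‖T‖⁴ + ‖T‖⁴ = 0`.
  rw [← sub_eq_zero, ← norm_eq_zero, ← sq_eq_zero_iff]
  set σ := ‖T‖
  have hTTx : ‖T (T x)‖ ≤ σ ^ 2 := by
    calc ‖T (T x)‖ ≤ σ * ‖T x‖ := T.le_opNorm _
      _ = σ ^ 2 := by rw [hTx, sq]
  have hinner : ⟪T (T x), x⟫ = -σ ^ 2 := by rw [hT, real_inner_self_eq_norm_sq, hTx]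
  refine le_antisymm ?_ (sq_nonneg _)
  rw [norm_sub_sq_real, inner_smul_right, norm_smul, hinner, mul_pow, Real.norm_eq_abs, sq_abs]
  nlinarith [pow_le_pow_left₀ (norm_nonneg _) hx 2, pow_le_pow_left₀ (norm_nonneg _) hTTx 2,
    sq_nonneg σ]

theorem ContinuousLinearMap.exists_apply_eq_opNorm_smul_and_apply_eq_neg_opNorm_smul
    [FiniteDimensional ℝ E] [Nontrivial E] (hT : ∀ a b, ⟪T a, b⟫ = -⟪a, T b⟫) :
    ∃ w u, w ≠ 0 ∧ T w = ‖T‖ • u ∧ T u = -‖T‖ • w := by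
  rcases (norm_nonneg T).eq_or_lt with hσ | hσ
  · obtain ⟨w, hw⟩ := exists_ne (0 : E)
    obtain rfl : T = 0 := (opNorm_zero_iff T).1 hσ.symm
    exact ⟨w, 0, hw, by simp⟩
  obtain ⟨w, hw, hTw⟩ := T.exists_norm_le_one_norm_apply_eq_opNorm
  refine ⟨w, ‖T‖⁻¹ • T w, ?_, ?_, ?_⟩
  · rintro rfl
    simp [hσ.ne] at hTw
  · rw [smul_inv_smul₀ hσ.ne']
  · rw [map_smul, T.apply_apply_eq_neg_opNorm_sq_smul hT hw hTw, smul_smul]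
    congr 1
    field_simp

end SkewOperator

namespace Matrix

variable {ι : Type*} [Fintype ι]

theorem dotProduct_mulVec_le_of_sum_row_le {P : Matrix ι ι ℝ} (hP : Pᵀ = P)
    (hP0 : ∀ i j, 0 ≤ P i j) {c : ℝ} (hc : ∀ i, ∑ j, P i j ≤ c) (v : ι → ℝ) :
    v ⬝ᵥ (P *ᵥ v) ≤ c * (v ⬝ᵥ v) := by
  have hsymm : ∑ i, ∑ j, P i j * v j ^ 2 = ∑ i, ∑ j, P i j * v i ^ 2 := by
    rw [Finset.sum_comm]
    refine sum_congr rfl fun i _ => sum_congr rfl fun j _ => ?_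
    rw [← transpose_apply P, hP]
  calc v ⬝ᵥ (P *ᵥ v) = ∑ i, ∑ j, P i j * (v i * v j) := by
        simp only [dotProduct, mulVec, mul_sum]
        exact sum_congr rfl fun i _ => sum_congr rfl fun j _ => by ring
    _ ≤ ∑ i, ∑ j, P i j * ((v i ^ 2 + v j ^ 2) / 2) := by
        gcongr with i _ j _
        · exact hP0 i j
        · nlinarith [sq_nonneg (v i - v j)]
    _ = ∑ i, (∑ j, P i j) * v i ^ 2 := by
        simp only [mul_div_assoc', mul_add, add_div, sum_add_distrib, ← sum_div, hsymm, sum_mul]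
        ring
    _ ≤ ∑ i, c * v i ^ 2 := by gcongr with i; exact hc i
    _ = c * (v ⬝ᵥ v) := by simp only [dotProduct, mul_sum, sq]

theorem dotProduct_mulVec_comm_of_transpose_eq {D : Matrix ι ι ℝ} (hD : Dᵀ = D) (v w : ι → ℝ) :
    v ⬝ᵥ (D *ᵥ w) = w ⬝ᵥ (D *ᵥ v) := by
  rw [← dotProduct_transpose_mulVec, hD]

theorem dotProduct_mulVec_comm_of_transpose_eq_neg {A : Matrix ι ι ℝ} (hA : Aᵀ = -A)
    (v w : ι → ℝ) : v ⬝ᵥ (A *ᵥ w) = -(w ⬝ᵥ (A *ᵥ v)) := by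
  rw [← dotProduct_transpose_mulVec, hA, neg_mulVec, dotProduct_neg]

theorem dotProduct_commutator_mulVec {A D : Matrix ι ι ℝ} (hA : Aᵀ = -A) (hD : Dᵀ = D)
    (v : ι → ℝ) : v ⬝ᵥ ((A * D - D * A) *ᵥ v) = -2 * ((D *ᵥ v) ⬝ᵥ (A *ᵥ v)) := by
  rw [sub_mulVec, dotProduct_sub, ← mulVec_mulVec, ← mulVec_mulVec,
    dotProduct_mulVec_comm_of_transpose_eq_neg hA, dotProduct_mulVec_comm_of_transpose_eq hD,
    dotProduct_comm (A *ᵥ v)]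
  ring

theorem sq_le_of_transpose_mul_self_eq_commutator_add {A D P : Matrix ι ι ℝ}
    (hA : Aᵀ = -A) (hD : Dᵀ = D) (hP : Pᵀ = P) (hP0 : ∀ i j, 0 ≤ P i j) {c : ℝ}
    (hc : ∀ i, ∑ j, P i j ≤ c) (hAA : Aᵀ * A = A * D - D * A + P) {σ : ℝ} {w u : ι → ℝ}
    (hw0 : w ≠ 0) (hw : A *ᵥ w = σ • u) (hu : A *ᵥ u = -σ • w) : σ ^ 2 ≤ c := by
  have hQ (v : ι → ℝ) :
      (A *ᵥ v) ⬝ᵥ (A *ᵥ v) = -2 * ((D *ᵥ v) ⬝ᵥ (A *ᵥ v)) + v ⬝ᵥ (P *ᵥ v) := by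
    rw [← dotProduct_commutator_mulVec hA hD, ← dotProduct_add, ← add_mulVec, ← hAA,
      ← mulVec_mulVec, dotProduct_transpose_mulVec]
  have hAw : (A *ᵥ w) ⬝ᵥ (A *ᵥ w) = σ ^ 2 * (u ⬝ᵥ u) := by
    rw [hw, smul_dotProduct, dotProduct_smul, smul_eq_mul, smul_eq_mul, ← mul_assoc, sq]
  have hAu : (A *ᵥ u) ⬝ᵥ (A *ᵥ u) = σ ^ 2 * (w ⬝ᵥ w) := by
    rw [hu, smul_dotProduct, dotProduct_smul, smul_eq_mul, smul_eq_mul, ← mul_assoc,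
      neg_mul_neg, sq]
  -- This cancellation is why a pair `(w, u)` is used rather than a single norming vector.
  have hcancel : (D *ᵥ w) ⬝ᵥ (A *ᵥ w) + (D *ᵥ u) ⬝ᵥ (A *ᵥ u) = 0 := by
    rw [hw, hu, dotProduct_smul, dotProduct_smul, dotProduct_comm (D *ᵥ u),
      ← dotProduct_mulVec_comm_of_transpose_eq hD, dotProduct_comm, smul_eq_mul, smul_eq_mul]
    ring
  have hsum : σ ^ 2 * (w ⬝ᵥ w + u ⬝ᵥ u) = w ⬝ᵥ (P *ᵥ w) + u ⬝ᵥ (P *ᵥ u) := by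
    linear_combination hQ w + hQ u - 2 * hcancel - hAw - hAu
  have hww : 0 < w ⬝ᵥ w := lt_of_le_of_ne (Fintype.sum_nonneg fun i => mul_self_nonneg (w i))
    (Ne.symm (dotProduct_self_eq_zero.not.2 hw0))
  have huu : 0 ≤ u ⬝ᵥ u := Fintype.sum_nonneg fun i => mul_self_nonneg (u i)
  refine le_of_mul_le_mul_right ?_ (add_pos_of_pos_of_nonneg hww huu)
  rw [hsum, mul_add]
  exact add_le_add (dotProduct_mulVec_le_of_sum_row_le hP hP0 hc w)
    (dotProduct_mulVec_le_of_sum_row_le hP hP0 hc u)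

variable [DecidableEq ι]

theorem sum_sq_apply_le_sq_norm_toEuclideanCLM (A : Matrix ι ι ℝ) (j : ι) :
    ∑ i, A i j ^ 2 ≤ ‖toEuclideanCLM (𝕜 := ℝ) A‖ ^ 2 := by
  have h := (toEuclideanCLM (𝕜 := ℝ) A).le_opNorm (WithLp.toLp 2 (Pi.single j 1))
  rw [toEuclideanCLM_toLp, mulVec_single_one, PiLp.toLp_single, PiLp.norm_single, norm_one,
    mul_one] at h
  calc ∑ i, A i j ^ 2 = ‖WithLp.toLp 2 (A.col j)‖ ^ 2 := by simp [EuclideanSpace.norm_sq_eq]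
    _ ≤ ‖toEuclideanCLM (𝕜 := ℝ) A‖ ^ 2 := by gcongr

theorem exists_mulVec_eq_norm_smul_of_transpose_eq_neg [Nonempty ι] {A : Matrix ι ι ℝ}
    (hA : Aᵀ = -A) : ∃ w u : ι → ℝ, w ≠ 0 ∧
      A *ᵥ w = ‖toEuclideanCLM (𝕜 := ℝ) A‖ • u ∧ A *ᵥ u = -‖toEuclideanCLM (𝕜 := ℝ) A‖ • w := by
  have hT (a b : EuclideanSpace ℝ ι) :
      ⟪toEuclideanCLM (𝕜 := ℝ) A a, b⟫ = -⟪a, toEuclideanCLM (𝕜 := ℝ) A b⟫ := by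
    rw [real_inner_comm, inner_toEuclideanCLM, inner_toEuclideanCLM,
      dotProduct_mulVec_comm_of_transpose_eq_neg hA]
  obtain ⟨w, u, hw0, hw, hu⟩ :=
    (toEuclideanCLM (𝕜 := ℝ) A).exists_apply_eq_opNorm_smul_and_apply_eq_neg_opNorm_smul hT
  refine ⟨w.ofLp, u.ofLp, (WithLp.ofLp_eq_zero 2).not.2 hw0, ?_, ?_⟩
  · simpa using congrArg WithLp.ofLp hw
  · simpa using congrArg WithLp.ofLp hu

theorem sq_norm_toEuclideanCLM_le_three_mul [Nonempty ι] {A D : Matrix ι ι ℝ} (hA : Aᵀ = -A)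
    (hD : Dᵀ = D) {S : ℝ} (hS : ∀ i, ∑ j, A i j ^ 2 ≤ S)
    (hAA : Aᵀ * A = A * D - D * A + ((2 : ℝ) • (A ⊙ A) + diagonal fun i => ∑ j, A i j ^ 2)) :
    ‖toEuclideanCLM (𝕜 := ℝ) A‖ ^ 2 ≤ 3 * S := by
  obtain ⟨w, u, hw0, hw, hu⟩ := exists_mulVec_eq_norm_smul_of_transpose_eq_neg hA
  refine sq_le_of_transpose_mul_self_eq_commutator_add hA hD ?_ ?_ (fun i => ?_) hAA hw0 hw hu
  · rw [transpose_add, transpose_smul, transpose_hadamard, hA, diagonal_transpose]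
    congr 2
    ext i j
    simp
  · intro i j
    rw [Matrix.add_apply, Matrix.smul_apply, hadamard_apply, diagonal_apply, smul_eq_mul, ← sq]
    split_ifs <;> positivity
  · simp only [Matrix.add_apply, Matrix.smul_apply, hadamard_apply, smul_eq_mul, sum_add_distrib,
      diagonal_apply, sum_ite_eq, mem_univ, if_true, ← mul_sum, ← sq]
    linarith [hS i]

end Matrix

section Amat

variable {R : ℕ} (x : Fin R → ℝ)

@[simp]
theorem Amat_apply_self (m : Fin R) : Amat x m m = 0 := by simp [Amat]

theorem Amat_apply_of_ne {m n : Fin R} (h : m ≠ n) : Amat x m n = 1 / (x m - x n) := by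
  simp [Amat, h]

theorem Amat_apply_swap (m n : Fin R) : Amat x n m = -Amat x m n := by
  rcases eq_or_ne m n with rfl | h
  · simp
  · rw [Amat_apply_of_ne x h, Amat_apply_of_ne x h.symm, ← neg_sub, div_neg]

theorem Amat_transpose : (Amat x)ᵀ = -Amat x := by
  ext m n
  exact Amat_apply_swap x m n

theorem sum_Amat_apply_sq_eq_sum_erase (m : Fin R) :
    ∑ n, Amat x m n ^ 2 = ∑ n ∈ univ.erase m, (1 / (x m - x n)) ^ 2 := by
  rw [← sum_erase_add univ _ (mem_univ m), Amat_apply_self, sq, mul_zero, add_zero]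
  exact sum_congr rfl fun n hn => by rw [Amat_apply_of_ne x (ne_of_mem_erase hn).symm]

variable {x}

theorem Amat_mul_Amat_eq_of_ne (hx : Function.Injective x) {m k n : Fin R} (hmk : m ≠ k)
    (hnm : n ≠ m) (hnk : n ≠ k) :
    Amat x m n * Amat x k n = Amat x m k * (Amat x k n - Amat x m n) := by
  rw [Amat_apply_of_ne x hmk, Amat_apply_of_ne x hnm.symm, Amat_apply_of_ne x hnk.symm]
  have := sub_ne_zero.2 (hx.ne hmk)
  have := sub_ne_zero.2 (hx.ne hnm.symm)
  have := sub_ne_zero.2 (hx.ne hnk.symm)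
  field_simp
  ring

theorem Amat_transpose_mul_self (hx : Function.Injective x) :
    (Amat x)ᵀ * Amat x = Amat x * diagonal (fun m => ∑ n, Amat x m n)
      - diagonal (fun m => ∑ n, Amat x m n) * Amat x
      + ((2 : ℝ) • (Amat x ⊙ Amat x) + diagonal fun m => ∑ n, Amat x m n ^ 2) := by
  ext m k
  have hlhs : ((Amat x)ᵀ * Amat x) m k = ∑ n, Amat x m n * Amat x k n := by
    simp only [mul_apply, transpose_apply, Amat_apply_swap x _ m, Amat_apply_swap x _ k,
      neg_mul_neg]
  rw [hlhs, Matrix.add_apply, Matrix.sub_apply, Matrix.add_apply, mul_diagonal, diagonal_mul,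
    Matrix.smul_apply, hadamard_apply, diagonal_apply]
  rcases eq_or_ne m k with rfl | hmk
  · simp [sq]
  have key : ∑ n, (Amat x m n * Amat x k n - Amat x m k * (Amat x k n - Amat x m n))
      = 2 * Amat x m k ^ 2 := by
    rw [Fintype.sum_eq_add m k hmk fun n ⟨hnm, hnk⟩ => by
      rw [Amat_mul_Amat_eq_of_ne hx hmk hnm hnk, sub_self]]
    simp only [Amat_apply_self, Amat_apply_swap x m k]
    ring
  rw [sum_sub_distrib, ← mul_sum, sum_sub_distrib] at key
  rw [if_neg hmk, smul_eq_mul]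
  linear_combination key

end Amat

/-- `max_m Σ_{n ≠ m} a_{m,n}² ≤ ‖A(x)‖² ≤ 3 max_m Σ_{n ≠ m} a_{m,n}²`. -/
theorem specNorm_sq_bounds {R : ℕ} (hR : 0 < R) (x : Fin R → ℝ)
    (hx : Function.Injective x) :
    Finset.univ.sup' ⟨⟨0, hR⟩, Finset.mem_univ _⟩
        (fun m => ∑ n ∈ Finset.univ.erase m, (1 / (x m - x n)) ^ 2) ≤
      specNorm (Amat x) ^ 2 ∧
    specNorm (Amat x) ^ 2 ≤
      3 * Finset.univ.sup' ⟨⟨0, hR⟩, Finset.mem_univ _⟩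
        (fun m => ∑ n ∈ Finset.univ.erase m, (1 / (x m - x n)) ^ 2) := by
  have : Nonempty (Fin R) := ⟨⟨0, hR⟩⟩
  simp only [← sum_Amat_apply_sq_eq_sum_erase]
  constructor
  · refine sup'_le _ _ fun m _ => ?_
    have h := sum_sq_apply_le_sq_norm_toEuclideanCLM (Amat x) m
    simp only [Amat_apply_swap x m, neg_sq] at h
    exact h
  · exact sq_norm_toEuclideanCLM_le_three_mul (Amat_transpose x) (diagonal_transpose _)
      (fun m => le_sup' (fun m => ∑ n, Amat x m n ^ 2) (mem_univ m)) (Amat_transpose_mul_self hx)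
end

section
/- There exists a constant b > 0 such that for every integer R ≥ 3, π − ‖T_R‖ ≤ (π e log R)/R + (2π e³)/R; in particular π − ‖T_R‖ ≤ b (log R)/R for all R ≥ 2. -/
/-!
Test the bilinear form of `T_R` on the vectors `(w_n sin nθ)` and `(w_n cos nθ)`, where `w` are the
coefficients of `(1 + X + ⋯ + X^(L-1))^p`. Writing `g(t) = |∑ w_n e^(int)|²`, antisymmetry of `T_R`
gives `2⟨w sin nθ, T_R (w cos nθ)⟩ = ∫₀^θ g - θ‖w‖²`, and since `∫₀^π g = π‖w‖²` this yields
`(π - θ - ‖T_R‖)‖w‖² ≤ ∫_θ^π g`. On `[θ, π]` the geometric-sum bound `|∑_{j<L} e^(ijt)| ≤ π/t` gives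
`g(t) ≤ (π/t)^(2p)`, while Cauchy–Schwarz gives `‖w‖² ≥ L^(2p)/R`. Taking `p ≈ (log R)/2`,
`L ≈ R/log R` and `θ = πe/L` makes both error terms `O(log R / R)`.
-/

/-- The `R × R` Hilbert matrix `T_R`, with entries `1/(m - n)` for `m ≠ n`
and `0` on the diagonal. -/
noncomputable def Tmat (R : ℕ) : Matrix (Fin R) (Fin R) ℝ :=
  Matrix.of fun m n => if m = n then 0 else 1 / ((m : ℝ) - (n : ℝ))

open Real Finset Matrix

theorem dotProduct_mulVec_of_transpose_eq_neg {ι α : Type*} [Fintype ι] [CommRing α]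
    {M : Matrix ι ι α} (hM : Mᵀ = -M) (x y : ι → α) :
    2 * (y ⬝ᵥ M *ᵥ x) = ∑ m, ∑ n, M m n * (y m * x n - y n * x m) := by
  have hskew (m n : ι) : M n m = -M m n := by simpa using congrFun (congrFun hM m) n
  have hswap : y ⬝ᵥ M *ᵥ x = -∑ m, ∑ n, M m n * (y n * x m) := by
    simp only [dotProduct, mulVec, Finset.mul_sum]
    rw [Finset.sum_comm, ← Finset.sum_neg_distrib]
    refine Finset.sum_congr rfl fun m _ => ?_
    rw [← Finset.sum_neg_distrib]
    refine Finset.sum_congr rfl fun n _ => ?_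
    rw [hskew]
    ring
  have hdirect : y ⬝ᵥ M *ᵥ x = ∑ m, ∑ n, M m n * (y m * x n) := by
    simp only [dotProduct, mulVec, Finset.mul_sum]
    refine Finset.sum_congr rfl fun m _ => Finset.sum_congr rfl fun n _ => ?_
    ring
  simp only [mul_sub, Finset.sum_sub_distrib]
  linear_combination hdirect + hswap

theorem Tmat_transpose (R : ℕ) : (Tmat R)ᵀ = -Tmat R := by
  ext m n
  by_cases h : m = n
  · simp [Tmat, h]
  · rw [transpose_apply, neg_apply]
    simp only [Tmat, of_apply, if_neg h, if_neg (Ne.symm h)]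
    rw [← one_div_neg_eq_neg_one_div, neg_sub]

theorem specNorm_nonneg {R : ℕ} (M : Matrix (Fin R) (Fin R) ℝ) : 0 ≤ specNorm M :=
  norm_nonneg _

theorem dotProduct_mulVec_le_specNorm {R : ℕ} (M : Matrix (Fin R) (Fin R) ℝ) (x y : Fin R → ℝ) :
    y ⬝ᵥ M *ᵥ x ≤ specNorm M * ((x ⬝ᵥ x + y ⬝ᵥ y) / 2) := by
  have hnorm (v : Fin R → ℝ) : ‖WithLp.toLp 2 v‖ ^ 2 = v ⬝ᵥ v := by
    rw [EuclideanSpace.real_norm_sq_eq]; simp [dotProduct, sq]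
  calc y ⬝ᵥ M *ᵥ x = inner ℝ (WithLp.toLp 2 y) (toEuclideanCLM (𝕜 := ℝ) M (WithLp.toLp 2 x)) :=
        (inner_toEuclideanCLM M _ _).symm
    _ ≤ ‖WithLp.toLp 2 y‖ * (specNorm M * ‖WithLp.toLp 2 x‖) :=
        (real_inner_le_norm _ _).trans (by gcongr; exact (toEuclideanCLM (𝕜 := ℝ) M).le_opNorm _)
    _ ≤ specNorm M * ((x ⬝ᵥ x + y ⬝ᵥ y) / 2) := by
        rw [← hnorm, ← hnorm]
        nlinarith [specNorm_nonneg M, two_mul_le_add_sq ‖WithLp.toLp 2 x‖ ‖WithLp.toLp 2 y‖]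

open ComplexConjugate

noncomputable def trigSumNormSq {R : ℕ} (w : Fin R → ℝ) (t : ℝ) : ℝ :=
  ‖∑ n, (w n : ℂ) * Complex.exp (t * Complex.I) ^ (n : ℕ)‖ ^ 2

section TrigSum

variable {R : ℕ} (w : Fin R → ℝ)

theorem trigSumNormSq_eq_sum_cos (t : ℝ) :
    trigSumNormSq w t = ∑ m, ∑ n, w m * w n * cos ((m - n : ℝ) * t) := by
  have hterm (m n : Fin R) :
      (w m : ℂ) * Complex.exp (t * Complex.I) ^ (m : ℕ) *
          conj ((w n : ℂ) * Complex.exp (t * Complex.I) ^ (n : ℕ)) =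
        ((w m * w n : ℝ) : ℂ) * Complex.exp (((m - n : ℝ) * t : ℝ) * Complex.I) := by
    rw [map_mul, Complex.conj_ofReal, map_pow, ← Complex.exp_conj, ← Complex.exp_nat_mul,
      ← Complex.exp_nat_mul, map_mul, Complex.conj_ofReal, Complex.conj_I]
    push_cast
    rw [mul_mul_mul_comm, ← Complex.exp_add]
    ring_nf
  rw [trigSumNormSq, Complex.sq_norm, ← Complex.ofReal_re (Complex.normSq _), ← Complex.mul_conj,
    map_sum, Finset.sum_mul_sum, Complex.re_sum]
  refine Finset.sum_congr rfl fun m _ => ?_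
  rw [Complex.re_sum]
  refine Finset.sum_congr rfl fun n _ => ?_
  rw [hterm, Complex.re_ofReal_mul, Complex.exp_ofReal_mul_I_re]

theorem continuous_trigSumNormSq : Continuous (trigSumNormSq w) := by
  unfold trigSumNormSq
  fun_prop

theorem integral_cos_mul_eq (k θ : ℝ) :
    ∫ t in 0..θ, cos (k * t) = if k = 0 then θ else sin (k * θ) / k := by
  split_ifs with hk
  · simp [hk]
  · rw [intervalIntegral.integral_comp_mul_left (fun t => cos t) hk, integral_cos]
    simp [smul_eq_mul, div_eq_inv_mul]

theorem integral_trigSumNormSq (θ : ℝ) :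
    ∫ t in 0..θ, trigSumNormSq w t =
      θ * ∑ n, w n ^ 2 + ∑ m, ∑ n, Tmat R m n * (w m * w n * sin ((m - n : ℝ) * θ)) := by
  have hterm (m n : Fin R) :
      w m * w n * ∫ t in 0..θ, cos ((m - n : ℝ) * t) =
        (if m = n then θ * (w m * w n) else 0) +
          Tmat R m n * (w m * w n * sin ((m - n : ℝ) * θ)) := by
    have hsub : (m - n : ℝ) = 0 ↔ m = n := by
      rw [sub_eq_zero, Nat.cast_inj, Fin.val_inj]
    rw [integral_cos_mul_eq]
    by_cases h : m = n
    · simp only [h, sub_self, ↓reduceIte, Tmat, of_apply, zero_mul, sin_zero, mul_zero, add_zero]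
      ring
    · simp only [hsub, if_neg h, Tmat, of_apply]
      ring
  simp_rw [trigSumNormSq_eq_sum_cos]
  rw [intervalIntegral.integral_finsetSum fun m _ =>
    Continuous.intervalIntegrable (by fun_prop) _ _]
  have hinner (m : Fin R) : ∫ t in 0..θ, ∑ n, w m * w n * cos ((m - n : ℝ) * t) =
      ∑ n, w m * w n * ∫ t in 0..θ, cos ((m - n : ℝ) * t) := by
    rw [intervalIntegral.integral_finsetSum fun n _ =>
      Continuous.intervalIntegrable (by fun_prop) _ _]
    simp_rw [intervalIntegral.integral_const_mul]
  simp_rw [hinner, hterm, Finset.sum_add_distrib, Finset.sum_ite_eq,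
    Finset.mem_univ, if_true, Finset.mul_sum, sq]

theorem integral_trigSumNormSq_zero_pi :
    ∫ t in 0..π, trigSumNormSq w t = π * ∑ n, w n ^ 2 := by
  have hsin (m n : Fin R) : sin ((m - n : ℝ) * π) = 0 := by
    simpa using sin_int_mul_pi ((m : ℤ) - n)
  simp [integral_trigSumNormSq, hsin]

theorem two_mul_sin_dotProduct_Tmat_cos (θ : ℝ) :
    2 * ((fun m => w m * sin (m * θ)) ⬝ᵥ Tmat R *ᵥ fun n => w n * cos (n * θ)) =
      (∫ t in 0..θ, trigSumNormSq w t) - θ * ∑ n, w n ^ 2 := by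
  rw [dotProduct_mulVec_of_transpose_eq_neg (Tmat_transpose R), integral_trigSumNormSq w θ,
    add_sub_cancel_left]
  refine Finset.sum_congr rfl fun m _ => Finset.sum_congr rfl fun n _ => ?_
  rw [sub_mul, sin_sub]
  ring

theorem pi_sub_specNorm_mul_sum_sq_le (θ : ℝ) :
    (π - θ - specNorm (Tmat R)) * ∑ n, w n ^ 2 ≤ ∫ t in θ..π, trigSumNormSq w t := by
  have hnorms : ((fun n => w n * cos (n * θ)) ⬝ᵥ fun n => w n * cos (n * θ)) +
      ((fun m => w m * sin (m * θ)) ⬝ᵥ fun m => w m * sin (m * θ)) = ∑ n, w n ^ 2 := by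
    simp only [dotProduct, ← Finset.sum_add_distrib]
    refine Finset.sum_congr rfl fun n _ => ?_
    linear_combination (w n) ^ 2 * cos_sq_add_sin_sq ((n : ℝ) * θ)
  have hspec := dotProduct_mulVec_le_specNorm (Tmat R) (fun n => w n * cos (n * θ))
    (fun m => w m * sin (m * θ))
  have hsplit := intervalIntegral.integral_add_adjacent_intervals
    ((continuous_trigSumNormSq w).intervalIntegrable (μ := MeasureTheory.volume) 0 θ)
    ((continuous_trigSumNormSq w).intervalIntegrable θ π)
  rw [hnorms] at hspec
  rw [integral_trigSumNormSq_zero_pi] at hsplit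
  linarith [two_mul_sin_dotProduct_Tmat_cos w θ]

end TrigSum

open Polynomial in
noncomputable def geomSumPow (L p : ℕ) : ℕ[X] := (∑ j ∈ range L, X ^ j) ^ p

noncomputable def geomWeights (R L p : ℕ) (n : Fin R) : ℝ := (geomSumPow L p).coeff n

section GeomWeights

variable {R L p : ℕ}

open Polynomial in
theorem natDegree_geomSumPow_le (L p : ℕ) : (geomSumPow L p).natDegree ≤ p * (L - 1) := by
  refine natDegree_pow_le_of_le p (natDegree_sum_le_of_forall_le _ _ fun j hj => ?_)
  rw [natDegree_X_pow]
  have := Finset.mem_range.mp hj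
  omega

open Polynomial in
theorem sum_coeff_geomSumPow_mul_pow {S : Type*} [CommSemiring S] (hR : p * (L - 1) < R)
    (z : S) : ∑ n : Fin R, ((geomSumPow L p).coeff n : S) * z ^ (n : ℕ) =
      (∑ j ∈ range L, z ^ j) ^ p := by
  have h := aeval_eq_sum_range' ((natDegree_geomSumPow_le L p).trans_lt hR) z
  simp only [geomSumPow, map_pow, map_sum, aeval_X] at h
  rw [h, ← Fin.sum_univ_eq_sum_range]
  simp [geomSumPow, nsmul_eq_mul]

theorem trigSumNormSq_geomWeights (hR : p * (L - 1) < R) (t : ℝ) :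
    trigSumNormSq (geomWeights R L p) t =
      ‖∑ j ∈ range L, Complex.exp (t * Complex.I) ^ j‖ ^ (2 * p) := by
  rw [trigSumNormSq, pow_mul', ← norm_pow (∑ j ∈ range L, _) p, ← sum_coeff_geomSumPow_mul_pow hR]
  simp [geomWeights]

theorem norm_geom_sum_exp_mul_I_le (L : ℕ) {t : ℝ} (ht : 0 < t) (htπ : t ≤ π) :
    ‖∑ j ∈ range L, Complex.exp (t * Complex.I) ^ j‖ ≤ π / t := by
  have hsub : 2 * t / π ≤ ‖Complex.exp (t * Complex.I) - 1‖ := by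
    rw [mul_comm (t : ℂ), Complex.norm_exp_I_mul_ofReal_sub_one, norm_mul, Real.norm_two,
      Real.norm_of_nonneg (sin_nonneg_of_nonneg_of_le_pi (by linarith) (by linarith))]
    have h := mul_le_sin (x := t / 2) (by linarith) (by linarith)
    have : 2 * t / π = 2 * (2 / π * (t / 2)) := by ring
    linarith
  have hsub_pos : 0 < 2 * t / π := by positivity
  have hne : Complex.exp (t * Complex.I) ≠ 1 := by
    intro h
    rw [h, sub_self, norm_zero] at hsub
    linarith
  have hnum : ‖Complex.exp (t * Complex.I) ^ L - 1‖ ≤ 2 := by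
    refine (norm_sub_le _ _).trans ?_
    rw [norm_pow, Complex.norm_exp_ofReal_mul_I]
    norm_num
  calc ‖∑ j ∈ range L, Complex.exp (t * Complex.I) ^ j‖
      = ‖Complex.exp (t * Complex.I) ^ L - 1‖ / ‖Complex.exp (t * Complex.I) - 1‖ := by
        rw [geom_sum_eq hne, norm_div]
    _ ≤ 2 / (2 * t / π) := div_le_div₀ zero_le_two hnum hsub_pos hsub
    _ = π / t := by field_simp

theorem trigSumNormSq_geomWeights_le (hR : p * (L - 1) < R) {t : ℝ} (ht : 0 < t)
    (htπ : t ≤ π) : trigSumNormSq (geomWeights R L p) t ≤ (π / t) ^ (2 * p) := by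
  rw [trigSumNormSq_geomWeights hR]
  exact pow_le_pow_left₀ (norm_nonneg _) (norm_geom_sum_exp_mul_I_le L ht htπ) _

theorem pow_le_mul_sum_sq_geomWeights (hR : p * (L - 1) < R) :
    (L : ℝ) ^ (2 * p) ≤ R * ∑ n, geomWeights R L p n ^ 2 := by
  have hsum : ∑ n, geomWeights R L p n = (L : ℝ) ^ p := by
    simpa [geomWeights] using sum_coeff_geomSumPow_mul_pow hR (1 : ℝ)
  simpa [hsum, ← pow_mul, mul_comm] using
    sq_sum_le_card_mul_sum_sq (s := Finset.univ) (f := geomWeights R L p)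

end GeomWeights

theorem integral_inv_pow_succ_le {a b : ℝ} (ha : 0 < a) (hab : a ≤ b) {k : ℕ} (hk : 0 < k) :
    ∫ t in a..b, (t ^ (k + 1))⁻¹ ≤ ((k : ℝ) * a ^ k)⁻¹ := by
  have h0 : (0 : ℝ) ∉ Set.uIcc a b := by
    rw [Set.uIcc_of_le hab]
    exact fun h => absurd h.1 (not_le.mpr ha)
  have hint := integral_zpow (a := a) (b := b) (n := -((k + 1 : ℕ) : ℤ))
    (Or.inr ⟨by omega, h0⟩)
  have hexp : -((k + 1 : ℕ) : ℤ) + 1 = -(k : ℤ) := by push_cast; ring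
  have hden : (((-((k + 1 : ℕ) : ℤ) : ℤ) : ℝ) + 1) = -(k : ℝ) := by push_cast; ring
  simp only [_root_.zpow_neg, zpow_natCast] at hint
  rw [hint, hexp, hden, _root_.zpow_neg, _root_.zpow_neg, zpow_natCast, zpow_natCast, div_neg,
    ← neg_div, neg_sub, mul_inv, ← div_eq_inv_mul]
  exact div_le_div_of_nonneg_right
    (sub_le_self _ (inv_nonneg.mpr (pow_nonneg (ha.le.trans hab) k))) k.cast_nonneg

section MainEstimate

variable {R L p : ℕ}

theorem integral_trigSumNormSq_geomWeights_le (hp : 1 ≤ p) (hR : p * (L - 1) < R) {θ : ℝ}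
    (hθ : 0 < θ) (hθπ : θ ≤ π) :
    ∫ t in θ..π, trigSumNormSq (geomWeights R L p) t ≤
      π ^ (2 * p) / ((2 * p - 1 : ℕ) * θ ^ (2 * p - 1)) := by
  set k := 2 * p - 1
  have hk : 0 < k := by omega
  have h2p : 2 * p = k + 1 := by omega
  rw [h2p]
  have hcont : ContinuousOn (fun t : ℝ => (π / t) ^ (k + 1)) (Set.uIcc θ π) := by
    refine (continuousOn_const.div continuousOn_id fun t ht => ?_).pow _
    rw [Set.uIcc_of_le hθπ] at ht
    exact (hθ.trans_le ht.1).ne'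
  calc ∫ t in θ..π, trigSumNormSq (geomWeights R L p) t
      ≤ ∫ t in θ..π, (π / t) ^ (k + 1) := by
        refine intervalIntegral.integral_mono_on hθπ
          ((continuous_trigSumNormSq _).intervalIntegrable _ _) hcont.intervalIntegrable
          fun t ht => ?_
        rw [← h2p]
        exact trigSumNormSq_geomWeights_le hR (hθ.trans_le ht.1) ht.2
    _ = π ^ (k + 1) * ∫ t in θ..π, (t ^ (k + 1))⁻¹ := by
        rw [← intervalIntegral.integral_const_mul]
        simp only [div_eq_mul_inv, mul_pow, inv_pow]
    _ ≤ π ^ (k + 1) * ((k : ℝ) * θ ^ k)⁻¹ := by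
        gcongr
        exact integral_inv_pow_succ_le hθ hθπ hk
    _ = π ^ (k + 1) / (k * θ ^ k) := rfl

theorem pi_sub_specNorm_le_of_geomWeights (hp : 1 ≤ p) (hL : 1 ≤ L) (hR : p * (L - 1) < R)
    {θ : ℝ} (hθ : 0 < θ) (hθπ : θ ≤ π) :
    π - specNorm (Tmat R) ≤
      θ + R * π ^ (2 * p) / ((2 * p - 1 : ℕ) * θ ^ (2 * p - 1) * L ^ (2 * p)) := by
  set T := π ^ (2 * p) / ((2 * p - 1 : ℕ) * θ ^ (2 * p - 1))
  set c := ∑ n, geomWeights R L p n ^ 2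
  have hT : 0 ≤ T := by positivity
  have hLpos : (0 : ℝ) < L ^ (2 * p) := by positivity
  have hc : (L : ℝ) ^ (2 * p) ≤ R * c := pow_le_mul_sum_sq_geomWeights hR
  have hcpos : 0 < c := pos_of_mul_pos_right (hLpos.trans_le hc) R.cast_nonneg
  have hkey : (π - θ - specNorm (Tmat R)) * c ≤ T :=
    (pi_sub_specNorm_mul_sum_sq_le _ θ).trans
      (integral_trigSumNormSq_geomWeights_le hp hR hθ hθπ)
  have hTc : T / c ≤ R * T / L ^ (2 * p) := by
    rw [div_le_div_iff₀ hcpos hLpos]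
    nlinarith
  calc π - specNorm (Tmat R) ≤ θ + T / c := by
        rw [← sub_le_iff_le_add', le_div_iff₀ hcpos]
        linarith
    _ ≤ θ + R * T / L ^ (2 * p) := by gcongr
    _ = θ + R * π ^ (2 * p) / ((2 * p - 1 : ℕ) * θ ^ (2 * p - 1) * L ^ (2 * p)) := by
        simp only [T]
        ring

end MainEstimate

theorem pi_sub_specNorm_le_of_exp_one_lt {R L p : ℕ} (hp : 1 ≤ p) (hL : exp 1 < L)
    (hR : p * (L - 1) < R) :
    π - specNorm (Tmat R) ≤
      π * exp 1 / L + π * R / ((2 * p - 1 : ℕ) * exp 1 ^ (2 * p - 1) * L) := by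
  have hLpos : (0 : ℝ) < L := (exp_pos 1).trans hL
  have hθπ : π * exp 1 / L ≤ π := by
    rw [div_le_iff₀ hLpos]
    exact mul_le_mul_of_nonneg_left hL.le pi_pos.le
  have hmain := pi_sub_specNorm_le_of_geomWeights hp (Nat.cast_pos.mp hLpos) hR
    (by positivity) hθπ
  obtain ⟨k, hk⟩ : ∃ k, 2 * p = k + 1 := ⟨2 * p - 1, by omega⟩
  have hk' : 2 * p - 1 = k := by omega
  rw [hk'] at hmain ⊢
  rw [hk] at hmain
  convert hmain using 2
  rw [div_pow]
  field_simp
  ring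

theorem exists_geomWeights_params_of_two_lt_log {R : ℕ} (hlog : 2 < log R) :
    ∃ p L : ℕ, log R < 2 * p ∧ (R : ℝ) < L * log R ∧ p * (L - 1) < R := by
  have hRpos : (0 : ℝ) < R :=
    Nat.cast_pos.mpr (Nat.pos_of_ne_zero (by rintro rfl; norm_num at hlog))
  set ℓ := log (R : ℝ)
  have hℓ : 0 < ℓ := by linarith
  refine ⟨⌊ℓ / 2⌋₊ + 1, ⌊(R : ℝ) / ℓ⌋₊ + 1, ?_, ?_, ?_⟩
  · push_cast
    linarith [Nat.lt_floor_add_one (ℓ / 2)]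
  · rw [← div_lt_iff₀ hℓ]
    push_cast
    exact Nat.lt_floor_add_one _
  · have hp : ((⌊ℓ / 2⌋₊ + 1 : ℕ) : ℝ) ≤ ℓ / 2 + 1 := by
      push_cast
      linarith [Nat.floor_le (by positivity : 0 ≤ ℓ / 2)]
    have hL : ((⌊(R : ℝ) / ℓ⌋₊ + 1 - 1 : ℕ) : ℝ) ≤ R / ℓ := by
      simpa using Nat.floor_le (by positivity : (0 : ℝ) ≤ R / ℓ)
    have hRℓ : (R : ℝ) / ℓ < R / 2 := div_lt_div_of_pos_left hRpos two_pos hlog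
    have : ((⌊ℓ / 2⌋₊ + 1 : ℕ) : ℝ) * ((⌊(R : ℝ) / ℓ⌋₊ + 1 - 1 : ℕ) : ℝ) < R := calc
      _ ≤ (ℓ / 2 + 1) * (R / ℓ) := by gcongr
      _ = R / 2 + R / ℓ := by field_simp
      _ < R := by linarith
    exact_mod_cast this

theorem pi_sub_specNorm_le_of_two_lt_log {R : ℕ} (hlog : 2 < log R) (hR : exp 1 * log R < R) :
    π - specNorm (Tmat R) ≤ π * exp 1 * log R / R + 2 * π * exp 1 / R := by
  obtain ⟨p, L, hp, hL, hpL⟩ := exists_geomWeights_params_of_two_lt_log hlog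
  have hRpos : (0 : ℝ) < R := lt_of_le_of_lt (by positivity) hR
  have hLpos : (0 : ℝ) < L := pos_of_mul_pos_left (hRpos.trans hL) (by linarith)
  have heL : exp 1 < L := by nlinarith
  have hp1 : 1 ≤ p := by exact_mod_cast (by linarith : (1 : ℝ) ≤ p)
  have hmain := pi_sub_specNorm_le_of_exp_one_lt hp1 heL hpL
  set k := 2 * p - 1
  have hk : (1 : ℝ) ≤ k := by exact_mod_cast (show 1 ≤ k by omega)
  have hk2p : (k : ℝ) + 1 = 2 * p := by exact_mod_cast (show k + 1 = 2 * p by omega)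
  have hfirst : π * exp 1 / L ≤ π * exp 1 * log R / R := by
    rw [div_le_div_iff₀ hLpos hRpos]
    have := mul_le_mul_of_nonneg_left hL.le (by positivity : 0 ≤ π * exp 1)
    linarith
  have hsecond : π * R / (k * exp 1 ^ k * L) ≤ 2 * π * exp 1 / R := by
    have hRL : (R : ℝ) < 2 * k * L := by nlinarith
    have hRexp : (R : ℝ) < exp 1 * exp 1 ^ k := by
      rw [← pow_succ', exp_one_pow, ← exp_log hRpos]
      exact exp_lt_exp.mpr (by push_cast; linarith)
    rw [div_le_div_iff₀ (by positivity) hRpos]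
    nlinarith [mul_lt_mul'' hRL hRexp hRpos.le hRpos.le, pi_pos]
  linarith

theorem pi_sub_specNorm_le {R : ℕ} (hR : 0 < R) :
    π - specNorm (Tmat R) ≤ π * exp 1 * log R / R + 2 * π * exp 1 ^ 3 / R := by
  have hRpos : (0 : ℝ) < R := Nat.cast_pos.mpr hR
  have he : 1 < exp 1 := one_lt_exp_iff.mpr one_pos
  have hlog : 0 ≤ log (R : ℝ) := log_nonneg (Nat.one_le_cast.mpr hR)
  rcases le_or_gt (R : ℝ) (exp 1 * log R + 2 * exp 1 ^ 3) with hsmall | hlarge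
  · have hπ : π ≤ π * exp 1 * log R / R + 2 * π * exp 1 ^ 3 / R := by
      rw [← add_div, le_div_iff₀ hRpos]
      nlinarith [pi_pos, hsmall]
    linarith [specNorm_nonneg (Tmat R)]
  · have he3 : exp 2 < exp 1 ^ 3 := by
      rw [exp_one_pow]
      exact exp_lt_exp.mpr (by norm_num)
    have h2 : 2 < log (R : ℝ) := by
      rw [lt_log_iff_exp_lt hRpos]
      nlinarith [exp_pos 2, he3]
    refine (pi_sub_specNorm_le_of_two_lt_log h2 (by linarith [pow_pos (exp_pos 1) 3])).trans ?_
    gcongr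
    exact le_self_pow₀ he.le (by norm_num)

/-- For every `R ≥ 3`, `π - ‖T_R‖ ≤ (π e log R)/R + (2π e³)/R`; in particular
there is a constant `b > 0` with `π - ‖T_R‖ ≤ b (log R)/R` for all `R ≥ 2`. -/
theorem pi_sub_specNorm_upper_bound :
    (∀ R : ℕ, 3 ≤ R →
      Real.pi - specNorm (Tmat R) ≤
        Real.pi * Real.exp 1 * Real.log R / R +
          2 * Real.pi * Real.exp 1 ^ 3 / R) ∧
    ∃ b > (0 : ℝ), ∀ R : ℕ, 2 ≤ R →
      Real.pi - specNorm (Tmat R) ≤ b * Real.log R / R := by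
  have hlog2 : 0 < log 2 := log_pos one_lt_two
  refine ⟨fun R hR => pi_sub_specNorm_le (by omega),
    π * exp 1 + 2 * π * exp 1 ^ 3 / log 2, by positivity, fun R hR => ?_⟩
  have hlogR : log 2 ≤ log (R : ℝ) := log_le_log two_pos (by exact_mod_cast hR)
  have hconst : 2 * π * exp 1 ^ 3 ≤ 2 * π * exp 1 ^ 3 / log 2 * log R := by
    rw [div_mul_eq_mul_div, le_div_iff₀ hlog2]
    gcongr
  calc π - specNorm (Tmat R) ≤ (π * exp 1 * log R + 2 * π * exp 1 ^ 3) / R := by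
        rw [add_div]
        exact pi_sub_specNorm_le (by omega)
    _ ≤ (π * exp 1 + 2 * π * exp 1 ^ 3 / log 2) * log R / R := by
        gcongr
        linarith
end
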